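/- In an imbrex geometry, all symplecta have the same polar rank. -/

import Mathlib

namespace ImbrexGeom

variable {P : Type*}

/-- Two points are collinear: equal or on a common line. -/
def Col (Ls : Set (Set P)) (x y : P) : Prop :=
  x = y ∨ ∃ L ∈ Ls, x ∈ L ∧ y ∈ L

/-- A line of the geometry induced on a subset `S`. -/
def LineIn (Ls : Set (Set P)) (S : Set P) (L : Set P) : Prop :=
  L ∈ Ls ∧ L ⊆ S

/-- Collinearity inside the geometry induced on `S`. -/
def ColIn (Ls : Set (Set P)) (S : Set P) (x y : P) : Prop :=
  x = y ∨ ∃ L, LineIn Ls S L ∧ x ∈ L ∧ y ∈ L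

/-- A subspace of the geometry induced on `S`. -/
def IsSubspaceIn (Ls : Set (Set P)) (S T : Set P) : Prop :=
  T ⊆ S ∧ ∀ L, LineIn Ls S L → ∀ x ∈ L, ∀ y ∈ L, x ≠ y → x ∈ T → y ∈ T → L ⊆ T

def IsSubspace (Ls : Set (Set P)) (T : Set P) : Prop :=
  IsSubspaceIn Ls Set.univ T

/-- A convex subspace (adapted to diameter 2): closed under taking common
neighbours of non-collinear pairs, i.e. all points on shortest paths. -/
def IsConvex (Ls : Set (Set P)) (S : Set P) : Prop :=
  IsSubspace Ls S ∧ ∀ x ∈ S, ∀ y ∈ S, ¬ Col Ls x y →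
    ∀ z, Col Ls x z → Col Ls z y → z ∈ S

/-- `S` is the smallest convex subspace containing `x` and `y`. -/
def SmallestConvex (Ls : Set (Set P)) (x y : P) (S : Set P) : Prop :=
  IsConvex Ls S ∧ x ∈ S ∧ y ∈ S ∧
    ∀ S', IsConvex Ls S' → x ∈ S' → y ∈ S' → S ⊆ S'

/-- A singular subspace of the geometry induced on `S`. -/
def IsSingularIn (Ls : Set (Set P)) (S T : Set P) : Prop :=
  IsSubspaceIn Ls S T ∧ ∀ x ∈ T, ∀ y ∈ T, ColIn Ls S x y

def IsSingular (Ls : Set (Set P)) (T : Set P) : Prop :=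
  IsSingularIn Ls Set.univ T

/-- A maximal singular subspace of the geometry induced on `S`. -/
def MaxSingularIn (Ls : Set (Set P)) (S T : Set P) : Prop :=
  IsSingularIn Ls S T ∧ ∀ T', IsSingularIn Ls S T' → T ⊆ T' → T' = T

/-- A block: a maximal singular subspace of the whole geometry. -/
def IsBlock (Ls : Set (Set P)) (B : Set P) : Prop :=
  MaxSingularIn Ls Set.univ B

/-- The geometry induced on `S` has polar rank `r`: every nested (strictly
increasing) sequence of singular subspaces has length at most `r + 1`, and
one of length `r + 1` exists. -/
def HasPolarRank (Ls : Set (Set P)) (S : Set P) (r : ℕ) : Prop :=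
  (∀ n : ℕ, ∀ f : Fin n → Set P, (∀ i, IsSingularIn Ls S (f i)) →
      (∀ i j, i < j → f i ⊂ f j) → n ≤ r + 1) ∧
  ∃ f : Fin (r + 1) → Set P, (∀ i, IsSingularIn Ls S (f i)) ∧
      ∀ i j : Fin (r + 1), i < j → f i ⊂ f j

/-- The geometry induced on `S` is a polar space of rank `r`
(Buekenhout–Shult axioms). -/
def IsPolarSpace (Ls : Set (Set P)) (S : Set P) (r : ℕ) : Prop :=
  (∀ L, LineIn Ls S L → ∃ x ∈ L, ∃ y ∈ L, ∃ z ∈ L, x ≠ y ∧ x ≠ z ∧ y ≠ z) ∧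
  (∀ x ∈ S, ∃ y ∈ S, ¬ ColIn Ls S x y) ∧
  HasPolarRank Ls S r ∧
  (∀ x ∈ S, ∀ L, LineIn Ls S L → x ∉ L →
      (∃! y, y ∈ L ∧ ColIn Ls S x y) ∨ ∀ y ∈ L, ColIn Ls S x y)

/-- A strong parapolar space of diameter 2. -/
structure StrongParapolar2 (Ls : Set (Set P)) : Prop where
  connected : ∀ x y : P, Relation.ReflTransGen (Col Ls) x y
  pps1 : ∀ x : P, ∀ L ∈ Ls, x ∉ L →
      (∀ y ∈ L, ¬ Col Ls x y) ∨ (∃! y, y ∈ L ∧ Col Ls x y) ∨ ∀ y ∈ L, Col Ls x y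
  pps1_none : ∃ x : P, ∃ L ∈ Ls, ∀ y ∈ L, ¬ Col Ls x y
  pps1_one : ∃ x : P, ∃ L ∈ Ls, x ∉ L ∧ ∃! y, y ∈ L ∧ Col Ls x y
  pps1_all : ∃ x : P, ∃ L ∈ Ls, x ∉ L ∧ ∀ y ∈ L, Col Ls x y
  pps2 : ∀ x y : P, ¬ Col Ls x y →
      ∃ S, SmallestConvex Ls x y S ∧ ∃ r, 2 ≤ r ∧ IsPolarSpace Ls S r

/-- A symplecton: the smallest convex subspace of a non-collinear pair. -/
def IsSymp (Ls : Set (Set P)) (S : Set P) : Prop :=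
  ∃ x y, ¬ Col Ls x y ∧ SmallestConvex Ls x y S

/-- (PPS4): every nested sequence of singular subspaces has finite length. -/
def PPS4 (Ls : Set (Set P)) : Prop :=
  ∀ f : ℕ → Set P, (∀ n, IsSingular Ls (f n)) → ¬ ∀ n, f n ⊂ f (n + 1)

/-- The imbrex axiom (Imb). -/
def Imb (Ls : Set (Set P)) : Prop :=
  ∀ x : P, ∀ L ∈ Ls, (∀ y ∈ L, ¬ Col Ls x y) →
    ∀ y₁ ∈ L, ∀ y₂ ∈ L, y₁ ≠ y₂ →
      ∀ S₁ S₂, SmallestConvex Ls x y₁ S₁ → SmallestConvex Ls x y₂ S₂ →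
        MaxSingularIn Ls S₁ (S₁ ∩ S₂) ∧ MaxSingularIn Ls S₂ (S₁ ∩ S₂)

/-- An imbrex geometry. -/
structure ImbrexGeometry (Ls : Set (Set P)) : Prop where
  spp : StrongParapolar2 Ls
  pps4 : PPS4 Ls
  imb : Imb Ls

/-- The geometry has symplectic rank `r`: all symplecta have polar rank `r`. -/
def SympRank (Ls : Set (Set P)) (r : ℕ) : Prop :=
  ∀ S, IsSymp Ls S → HasPolarRank Ls S r

/-- All symplecta are thick generalized quadrangles: every point of a
symplecton lies on at least three lines of it (lines already have at least
three points by the polar space axioms). -/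
def ThickSymps (Ls : Set (Set P)) : Prop :=
  ∀ S, IsSymp Ls S → ∀ x ∈ S, ∃ L₁ L₂ L₃, LineIn Ls S L₁ ∧ LineIn Ls S L₂ ∧
    LineIn Ls S L₃ ∧ L₁ ≠ L₂ ∧ L₁ ≠ L₃ ∧ L₂ ≠ L₃ ∧ x ∈ L₁ ∧ x ∈ L₂ ∧ x ∈ L₃

/-- The perp of a set of lines in the geometry induced on `S`: all lines of
`S` concurrent with every member of the set. -/
def PerpSet (Ls : Set (Set P)) (S : Set P) (T : Set (Set P)) : Set (Set P) :=
  {N | LineIn Ls S N ∧ ∀ M ∈ T, (N ∩ M).Nonempty}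

/-- A pair of lines is regular. -/
def RegularPair (Ls : Set (Set P)) (S : Set P) (L M : Set P) : Prop :=
  ∃ L' M', L' ∈ PerpSet Ls S {L, M} ∧ M' ∈ PerpSet Ls S {L, M} ∧ L' ≠ M' ∧
    PerpSet Ls S (PerpSet Ls S {L, M}) = PerpSet Ls S {L', M'}

/-- `N` is a member of the spread of the symplecton `H` induced by the
block `B`: `N = B' ∩ H` for some block `B'` meeting `B`. -/
def InSpreadOf (Ls : Set (Set P)) (H B : Set P) (N : Set P) : Prop :=
  ∃ B', IsBlock Ls B' ∧ (B' ∩ B).Nonempty ∧ N = B' ∩ H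

/-!
A symplecton is a polar space, so its maximal singular subspaces all have its rank (purity:
a maximal singular subspace `N` of full height not containing `M` is exchanged for one through
a point `q ∈ M \ N` and the hyperplane `q^⊥ ∩ N` of `N`, which meets `M` in more). Hence the
two symplecta of (Imb) have the rank of their common maximal singular subspace.

Symplecta through a common point `x` are `ξ(x, y)` and `ξ(x, y')`. When `y, y'` are collinear,
either their line is far from `x` and (Imb) applies, or the two symplecta coincide. Otherwise
`x^⊥ ∩ ξ(y, y')` is singular, and no singular subspace of a symplecton meets all its lines, so
some line of `ξ(y, y')` is far from `x`; joining `y` and `y'` to it reduces to the collinear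
case. Any two symplecta are linked through a third one meeting both.
-/

open Order

variable {Ls : Set (Set P)}

lemma Col.symm {x y : P} (h : Col Ls x y) : Col Ls y x := by
  rcases h with h | ⟨L, hL, hx, hy⟩
  · exact Or.inl h.symm
  · exact Or.inr ⟨L, hL, hy, hx⟩

lemma ColIn.col {S : Set P} {x y : P} (h : ColIn Ls S x y) : Col Ls x y := by
  rcases h with h | ⟨L, hL, hx, hy⟩
  · exact Or.inl h
  · exact Or.inr ⟨L, hL.1, hx, hy⟩

lemma IsSingularIn.col {S T : Set P} (hT : IsSingularIn Ls S T) {x y : P} (hx : x ∈ T)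
    (hy : y ∈ T) : Col Ls x y :=
  (hT.2 x hx y hy).col

lemma IsSubspace.lineIn {S L : Set P} (hS : IsSubspace Ls S) (hL : L ∈ Ls) {x y : P}
    (hxL : x ∈ L) (hyL : y ∈ L) (hxy : x ≠ y) (hx : x ∈ S) (hy : y ∈ S) : LineIn Ls S L :=
  ⟨hL, hS.2 L ⟨hL, Set.subset_univ L⟩ x hxL y hyL hxy hx hy⟩

lemma IsSubspace.colIn {S : Set P} (hS : IsSubspace Ls S) {x y : P}
    (hx : x ∈ S) (hy : y ∈ S) (h : Col Ls x y) : ColIn Ls S x y := by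
  rcases h with h | ⟨L, hL, hxL, hyL⟩
  · exact Or.inl h
  · by_cases hxy : x = y
    · exact Or.inl hxy
    · exact Or.inr ⟨L, hS.lineIn hL hxL hyL hxy hx hy, hxL, hyL⟩

lemma IsSubspaceIn.lineIn_of_lineIn {S M L : Set P} (hM : IsSubspaceIn Ls S M)
    (hL : LineIn Ls S L) {x y : P} (hxL : x ∈ L) (hyL : y ∈ L) (hxy : x ≠ y) (hx : x ∈ M)
    (hy : y ∈ M) : LineIn Ls M L :=
  ⟨hL.1, hM.2 L hL x hxL y hyL hxy hx hy⟩

lemma IsSubspaceIn.inter {S T T' : Set P} (hT : IsSubspaceIn Ls S T)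
    (hT' : IsSubspaceIn Ls S T') : IsSubspaceIn Ls S (T ∩ T') :=
  ⟨fun _ hx => hT.1 hx.1, fun L hL x hxL y hyL hxy hx hy =>
    Set.subset_inter (hT.2 L hL x hxL y hyL hxy hx.1 hy.1)
      (hT'.2 L hL x hxL y hyL hxy hx.2 hy.2)⟩

lemma IsSingularIn.inter {S T T' : Set P} (hT : IsSingularIn Ls S T)
    (hT' : IsSubspaceIn Ls S T') : IsSingularIn Ls S (T ∩ T') :=
  ⟨hT.1.inter hT', fun u hu v hv => hT.2 u hu.1 v hv.1⟩

lemma IsSubspaceIn.isSingularIn_iff {S M T : Set P} (hM : IsSubspaceIn Ls S M)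
    (hTM : T ⊆ M) : IsSingularIn Ls S T ↔ IsSingularIn Ls M T := by
  have lineIn_S {L : Set P} (hL : LineIn Ls M L) : LineIn Ls S L := ⟨hL.1, hL.2.trans hM.1⟩
  have colIn_M {x y : P} (hx : x ∈ M) (hy : y ∈ M) : ColIn Ls S x y → ColIn Ls M x y := by
    rintro (hxy | ⟨L, hL, hxL, hyL⟩)
    · exact Or.inl hxy
    · by_cases hxy : x = y
      · exact Or.inl hxy
      · exact Or.inr ⟨L, hM.lineIn_of_lineIn hL hxL hyL hxy hx hy, hxL, hyL⟩
  constructor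
  · rintro ⟨⟨-, hTsub⟩, hTcol⟩
    exact ⟨⟨hTM, fun L hL => hTsub L (lineIn_S hL)⟩,
      fun x hx y hy => colIn_M (hTM hx) (hTM hy) (hTcol x hx y hy)⟩
  · rintro ⟨⟨-, hTsub⟩, hTcol⟩
    refine ⟨⟨hTM.trans hM.1, fun L hL x hxL y hyL hxy hx hy => ?_⟩, fun x hx y hy => ?_⟩
    · exact hTsub L (hM.lineIn_of_lineIn hL hxL hyL hxy (hTM hx) (hTM hy)) x hxL y hyL hxy hx hy
    · rcases hTcol x hx y hy with hxy | ⟨L, hL, hxL, hyL⟩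
      · exact Or.inl hxy
      · exact Or.inr ⟨L, lineIn_S hL, hxL, hyL⟩

lemma StrongParapolar2.col_of_col_of_col (hs : StrongParapolar2 Ls) {L : Set P} (hL : L ∈ Ls)
    {d x y : P} (hxL : x ∈ L) (hyL : y ∈ L) (hxy : x ≠ y) (hdx : Col Ls d x)
    (hdy : Col Ls d y) {w : P} (hw : w ∈ L) : Col Ls d w := by
  by_cases hdL : d ∈ L
  · exact Or.inr ⟨L, hL, hdL, hw⟩
  rcases hs.pps1 d L hL hdL with hnone | ⟨z, _, hz⟩ | hall
  · exact absurd hdx (hnone x hxL)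
  · exact absurd ((hz x ⟨hxL, hdx⟩).trans (hz y ⟨hyL, hdy⟩).symm) hxy
  · exact hall w hw

lemma StrongParapolar2.isSubspaceIn_perp (hs : StrongParapolar2 Ls) (S X : Set P) :
    IsSubspaceIn Ls S {p ∈ S | ∀ x ∈ X, Col Ls x p} :=
  ⟨fun _ hp => hp.1, fun _ hL _ huL _ hvL huv hu hv _ hw =>
    ⟨hL.2 hw, fun x hx => hs.col_of_col_of_col hL.1 huL hvL huv (hu.2 x hx) (hv.2 x hx) hw⟩⟩

lemma StrongParapolar2.isSubspaceIn_col (hs : StrongParapolar2 Ls) (S : Set P) (x : P) :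
    IsSubspaceIn Ls S {p ∈ S | Col Ls x p} :=
  ⟨fun _ hp => hp.1, fun _ hL _ huL _ hvL huv hu hv _ hw =>
    ⟨hL.2 hw, hs.col_of_col_of_col hL.1 huL hvL huv hu.2 hv.2 hw⟩⟩

/-- The witness consists of the points collinear with everything collinear with all of `X`. -/
lemma StrongParapolar2.exists_isSingularIn_superset (hs : StrongParapolar2 Ls) {C X : Set P}
    (hC : IsSubspace Ls C) (hXC : X ⊆ C) (hX : ∀ x ∈ X, ∀ y ∈ X, Col Ls x y) :
    ∃ W, IsSingularIn Ls C W ∧ X ⊆ W := by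
  set Y := {p ∈ C | ∀ x ∈ X, Col Ls x p}
  refine ⟨Y ∩ {p ∈ C | ∀ y ∈ Y, Col Ls y p},
    ⟨(hs.isSubspaceIn_perp C X).inter (hs.isSubspaceIn_perp C Y), fun u hu v hv => ?_⟩,
    fun x hx =>
      ⟨⟨hXC hx, fun y hy => hX y hy x hx⟩, hXC hx, fun y hy => (hy.2 x hx).symm⟩⟩
  exact hC.colIn hu.1.1 hv.1.1 (hv.2.2 u hu.1)

lemma SmallestConvex.eq {x y : P} {S S' : Set P} (h : SmallestConvex Ls x y S)
    (h' : SmallestConvex Ls x y S') : S = S' :=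
  (h.2.2.2 S' h'.1 h'.2.1 h'.2.2.1).antisymm (h'.2.2.2 S h.1 h.2.1 h.2.2.1)

lemma SmallestConvex.mem_of_col {x y z : P} {S : Set P} (h : SmallestConvex Ls x y S)
    (hxy : ¬ Col Ls x y) (hxz : Col Ls x z) (hzy : Col Ls z y) : z ∈ S :=
  h.1.2 x h.2.1 y h.2.2.1 hxy z hxz hzy

lemma HasPolarRank.unique {S : Set P} {r r' : ℕ} (h : HasPolarRank Ls S r)
    (h' : HasPolarRank Ls S r') : r = r' := by
  obtain ⟨f, hf, hf'⟩ := h'.2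
  obtain ⟨g, hg, hg'⟩ := h.2
  have := h.1 _ f hf hf'
  have := h'.1 _ g hg hg'
  omega

lemma HasPolarRank.exists_lineIn {S : Set P} {r : ℕ} (h : HasPolarRank Ls S r) (hr : 2 ≤ r) :
    ∃ L, LineIn Ls S L := by
  obtain ⟨f, hf, hf'⟩ := h.2
  have h01 : f ⟨0, by omega⟩ ⊂ f ⟨1, by omega⟩ := hf' _ _ (Fin.mk_lt_mk.2 zero_lt_one)
  have h12 : f ⟨1, by omega⟩ ⊂ f ⟨2, by omega⟩ := hf' _ _ (Fin.mk_lt_mk.2 one_lt_two)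
  obtain ⟨a, ha, -⟩ := Set.exists_of_ssubset h01
  obtain ⟨b, hb, hb'⟩ := Set.exists_of_ssubset h12
  rcases (hf _).2 a (h12.subset ha) b hb with hab | ⟨L, hL, -⟩
  · exact absurd (hab ▸ ha) hb'
  · exact ⟨L, hL⟩

lemma IsPolarSpace.hasPolarRank {S : Set P} {r : ℕ} (h : IsPolarSpace Ls S r) :
    HasPolarRank Ls S r :=
  h.2.2.1

lemma IsPolarSpace.exists_not_colIn {S : Set P} {r : ℕ} (h : IsPolarSpace Ls S r) {x : P}
    (hx : x ∈ S) : ∃ y ∈ S, ¬ ColIn Ls S x y :=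
  h.2.1 x hx

lemma IsPolarSpace.exists_colIn_of_lineIn {S : Set P} {r : ℕ} (h : IsPolarSpace Ls S r)
    {x : P} (hx : x ∈ S) {L : Set P} (hL : LineIn Ls S L) : ∃ w ∈ L, ColIn Ls S x w := by
  by_cases hxL : x ∈ L
  · exact ⟨x, hxL, Or.inl rfl⟩
  rcases h.2.2.2 x hx L hL hxL with ⟨w, hw, -⟩ | hall
  · exact ⟨w, hw⟩
  · obtain ⟨w, hw, -⟩ := h.1 L hL
    exact ⟨w, hw, hall w hw⟩

lemma IsPolarSpace.exists_lineIn_mem {S : Set P} {r : ℕ} (h : IsPolarSpace Ls S r)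
    (hr : 2 ≤ r) {x : P} (hx : x ∈ S) : ∃ L, LineIn Ls S L ∧ x ∈ L := by
  obtain ⟨L, hL⟩ := h.hasPolarRank.exists_lineIn hr
  obtain ⟨w, hwL, hxw | ⟨M, hM, hxM, -⟩⟩ := h.exists_colIn_of_lineIn hx hL
  · exact ⟨L, hL, hxw ▸ hwL⟩
  · exact ⟨M, hM, hxM⟩

lemma IsSymp.isConvex {C : Set P} (hC : IsSymp Ls C) : IsConvex Ls C := by
  obtain ⟨_, _, _, h⟩ := hC
  exact h.1

lemma IsSymp.isSubspace {C : Set P} (hC : IsSymp Ls C) : IsSubspace Ls C :=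
  hC.isConvex.1

lemma IsSymp.exists_isPolarSpace (hs : StrongParapolar2 Ls) {C : Set P} (hC : IsSymp Ls C) :
    ∃ r, 2 ≤ r ∧ IsPolarSpace Ls C r := by
  obtain ⟨a, b, hab, hC⟩ := hC
  obtain ⟨S, hS, hPS⟩ := hs.pps2 a b hab
  exact hS.eq hC ▸ hPS

lemma height_le_height_inf_add_one {α : Type*} [SemilatticeInf α] {a b : α}
    (h : ∀ x y, x < y → y ≤ b → ¬ x ≤ a → x ⊓ a < y ⊓ a) {y : α} (hy : y ≤ b) :
    height y ≤ height (y ⊓ a) + 1 := by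
  suffices ∀ n : ℕ, ∀ y ≤ b, (n : ℕ∞) ≤ height y → n ≤ height (y ⊓ a) + 1 from
    ENat.forall_natCast_le_iff_le.1 fun n hn => this n y hy hn
  intro n
  induction n with
  | zero => simp
  | succ n ih =>
    intro y hy hn
    obtain ⟨x, hxy, hx⟩ : ∃ x < y, (n : ℕ∞) ≤ height x := by
      by_contra! hlt
      have := hn.trans (height_le_coe_iff.2 hlt)
      norm_cast at this
      omega
    by_cases hxa : x ≤ a
    · calc ((n + 1 : ℕ) : ℕ∞) ≤ height x + 1 := by push_cast; gcongr
        _ ≤ height (y ⊓ a) + 1 := by gcongr; exact le_inf hxy.le hxa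
    · calc ((n + 1 : ℕ) : ℕ∞) ≤ height (x ⊓ a) + 1 + 1 := by
            push_cast; gcongr; exact ih x (hxy.le.trans hy) hx
        _ ≤ height (y ⊓ a) + 1 := by gcongr; exact height_add_one_le (h x y hxy hy hxa)

abbrev SingIn (Ls : Set (Set P)) (S : Set P) : Type _ := {T : Set P // IsSingularIn Ls S T}

instance (S : Set P) : SemilatticeInf (SingIn Ls S) :=
  Subtype.semilatticeInf fun _ _ hT hT' => hT.inter hT'.1

lemma MaxSingularIn.isMax {S M : Set P} (hM : MaxSingularIn Ls S M) :
    IsMax (⟨M, hM.1⟩ : SingIn Ls S) :=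
  fun N hMN => (hM.2 N.1 N.2 hMN).le

lemma HasPolarRank.height_le {S : Set P} {r : ℕ} (h : HasPolarRank Ls S r)
    (T : SingIn Ls S) : height T ≤ r :=
  Order.height_le fun p _ => by
    have := h.1 (p.length + 1) (fun i => (p i).1) (fun i => (p i).2)
      fun _ _ hij => p.strictMono hij
    exact_mod_cast (by omega : p.length ≤ r)

lemma HasPolarRank.exists_le_height {S : Set P} {r : ℕ} (h : HasPolarRank Ls S r) :
    ∃ T : SingIn Ls S, (r : ℕ∞) ≤ height T := by
  obtain ⟨f, hf, hf'⟩ := h.2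
  let p := LTSeries.mk r (fun i => (⟨f i, hf i⟩ : SingIn Ls S)) fun i j hij => hf' i j hij
  exact ⟨p.last, length_le_height_last (p := p)⟩

lemma HasPolarRank.of_le_height {S : Set P} {r : ℕ} (h : HasPolarRank Ls S r)
    {M : SingIn Ls S} (hM : (r : ℕ∞) ≤ height M) : HasPolarRank Ls M.1 r := by
  refine ⟨fun n f hf hf' => h.1 n f (fun i => ?_) hf', ?_⟩
  · exact (M.2.1.isSingularIn_iff (hf i).1.1).2 (hf i)
  · obtain ⟨p, hp, hlen⟩ := exists_series_of_le_height M hM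
    subst hlen
    have hpM (i : Fin (p.length + 1)) : p i ≤ M := hp ▸ p.monotone (Fin.le_last i)
    exact ⟨fun i => (p i).1, fun i => (M.2.1.isSingularIn_iff (hpM i)).1 (p i).2,
      fun _ _ hij => p.strictMono hij⟩

lemma HasPolarRank.exists_isMax_ge {S : Set P} {r : ℕ} (h : HasPolarRank Ls S r)
    (T : SingIn Ls S) : ∃ N, T ≤ N ∧ IsMax N := by
  by_contra! hT
  have hgrow (k : ℕ) : ∃ N, T ≤ N ∧ (k : ℕ∞) ≤ height N := by
    induction k with
    | zero => exact ⟨T, le_rfl, by simp⟩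
    | succ k ih =>
      obtain ⟨N, hTN, hk⟩ := ih
      obtain ⟨N', hNN'⟩ := not_isMax_iff.1 (hT N hTN)
      refine ⟨N', hTN.trans hNN'.le, ?_⟩
      calc ((k + 1 : ℕ) : ℕ∞) ≤ height N + 1 := by push_cast; gcongr
        _ ≤ height N' := height_add_one_le hNN'
  obtain ⟨N, -, hN⟩ := hgrow (r + 1)
  have := hN.trans (h.height_le N)
  norm_cast at this
  omega

lemma inf_lt_inf_of_meets_lineIn {S : Set P} {H N x y : SingIn Ls S}
    (hH : ∀ L, LineIn Ls S L → L ⊆ N.1 → ∃ w ∈ L, w ∈ H.1) (hxy : x < y)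
    (hyN : y ≤ N) (hxH : ¬ x ≤ H) : x ⊓ H < y ⊓ H := by
  refine lt_of_le_not_ge (inf_le_inf_right H hxy.le) fun hle => ?_
  obtain ⟨u, hux, huH⟩ := Set.not_subset.1 hxH
  obtain ⟨v, hvy, hvx⟩ := Set.exists_of_ssubset hxy
  have huv : u ≠ v := fun h => hvx (h ▸ hux)
  obtain huv' | ⟨L, hL, huL, hvL⟩ := y.2.2 u (hxy.le hux) v hvy
  · exact huv huv'
  have hLy : L ⊆ y.1 := y.2.1.2 L hL u huL v hvL huv (hxy.le hux) hvy
  obtain ⟨w, hwL, hwH⟩ := hH L hL (hLy.trans hyN)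
  have hwx : w ∈ x.1 := (hle ⟨hLy hwL, hwH⟩).1
  have hwu : w ≠ u := fun h => huH (h ▸ hwH)
  exact hvx (x.2.1.2 L hL w hwL u huL hwu hwx hux hvL)

section Purity

variable {C : Set P} {r : ℕ}

lemma IsPolarSpace.exists_inf_lt (hs : StrongParapolar2 Ls) (hC : IsSubspace Ls C)
    (hPS : IsPolarSpace Ls C r) {M N : SingIn Ls C} (hMN : ¬ M ≤ N)
    (hN : (r : ℕ∞) ≤ height N) :
    ∃ N' : SingIn Ls C, IsMax N' ∧ (r : ℕ∞) ≤ height N' ∧ M ⊓ N < M ⊓ N' := by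
  obtain ⟨q, hqM, hqN⟩ := Set.not_subset.1 hMN
  have hqC : q ∈ C := M.2.1.1 hqM
  let Hq : SingIn Ls C := ⟨N.1 ∩ _, N.2.inter (hs.isSubspaceIn_col C q)⟩
  have hHq_meets : ∀ L, LineIn Ls C L → L ⊆ N.1 → ∃ w ∈ L, w ∈ Hq.1 := by
    intro L hL hLN
    obtain ⟨w, hwL, hqw⟩ := hPS.exists_colIn_of_lineIn hqC hL
    exact ⟨w, hwL, hLN hwL, hL.2 hwL, hqw.col⟩
  -- `Hq` is a hyperplane of `N`, so its height drops by at most one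
  have hN_le : height N ≤ height Hq + 1 := by
    simpa [inf_eq_right.2 (show Hq ≤ N from Set.inter_subset_left)] using
      height_le_height_inf_add_one (fun _ _ => inf_lt_inf_of_meets_lineIn hHq_meets) le_rfl
  obtain ⟨W, hW, hHqW⟩ := hs.exists_isSingularIn_superset hC (X := Hq.1 ∪ {q})
    (Set.union_subset Hq.2.1.1 (Set.singleton_subset_iff.2 hqC)) (by
      rintro x (hx | rfl) y (hy | rfl)
      · exact N.2.col hx.1 hy.1
      · exact hx.2.2.symm
      · exact hy.2.2
      · exact Or.inl rfl)
  have hHq_lt : Hq < ⟨W, hW⟩ :=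
    Set.ssubset_iff_subset_ne.2 ⟨fun x hx => hHqW (Or.inl hx),
      fun h => hqN (h ▸ hHqW (Or.inr rfl) : q ∈ Hq.1).1⟩
  obtain ⟨N', hWN', hN'⟩ := hPS.hasPolarRank.exists_isMax_ge ⟨W, hW⟩
  refine ⟨N', hN', ?_, ?_⟩
  · calc (r : ℕ∞) ≤ height Hq + 1 := hN.trans hN_le
      _ ≤ height (⟨W, hW⟩ : SingIn Ls C) := height_add_one_le hHq_lt
      _ ≤ height N' := height_mono hWN'
  · refine lt_of_le_not_ge (le_inf inf_le_left fun p hp => hWN' (hHqW (Or.inl ?_))) ?_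
    · exact ⟨hp.2, N.2.1.1 hp.2, M.2.col hqM hp.1⟩
    · exact fun hle => hqN (hle ⟨hqM, hWN' (hHqW (Or.inr rfl))⟩).2

lemma IsPolarSpace.le_height_of_isMax (hs : StrongParapolar2 Ls) (hC : IsSubspace Ls C)
    (hPS : IsPolarSpace Ls C r) {M : SingIn Ls C} (hM : IsMax M) :
    (r : ℕ∞) ≤ height M := by
  obtain ⟨T, hT⟩ := hPS.hasPolarRank.exists_le_height
  obtain ⟨N, hTN, hN⟩ := hPS.hasPolarRank.exists_isMax_ge T
  suffices ∀ k : ℕ, ∀ N : SingIn Ls C, IsMax N → (r : ℕ∞) ≤ height N →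
      (r : ℕ∞) ≤ height (M ⊓ N) + k → (r : ℕ∞) ≤ height M from
    this r N hN (hT.trans (height_mono hTN)) le_add_self
  intro k
  induction k with
  | zero =>
    exact fun N _ _ h => (by simpa using h : (r : ℕ∞) ≤ _).trans (height_mono inf_le_left)
  | succ k ih =>
    intro N hN hrN hk
    by_cases hMN : M ≤ N
    · exact (hM hMN).antisymm hMN ▸ hrN
    obtain ⟨N', hN', hrN', hlt⟩ := hPS.exists_inf_lt hs hC hMN hrN
    refine ih N' hN' hrN' (hk.trans ?_)
    calc height (M ⊓ N) + ((k + 1 : ℕ) : ℕ∞) = height (M ⊓ N) + 1 + k := by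
          push_cast; ring
      _ ≤ height (M ⊓ N') + k := by gcongr; exact height_add_one_le hlt

theorem IsPolarSpace.hasPolarRank_of_maxSingularIn (hs : StrongParapolar2 Ls)
    (hC : IsSubspace Ls C) (hPS : IsPolarSpace Ls C r) {M : Set P}
    (hM : MaxSingularIn Ls C M) : HasPolarRank Ls M r :=
  hPS.hasPolarRank.of_le_height (M := ⟨M, hM.1⟩) (hPS.le_height_of_isMax hs hC hM.isMax)

end Purity

lemma StrongParapolar2.mem_of_col_of_col (hs : StrongParapolar2 Ls) {C K : Set P}
    (hC : IsConvex Ls C) (hK : IsSingularIn Ls C K)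
    (hmeet : ∀ L, LineIn Ls C L → ∃ w ∈ L, w ∈ K) {a c w : P} (ha : a ∈ C)
    (hc : c ∈ K) (hac : ¬ Col Ls a c) (haw : Col Ls a w) (hwc : Col Ls w c) : w ∈ K := by
  by_contra hwK
  obtain rfl | ⟨M, hM, haM, hwM⟩ := haw
  · exact hac hwc
  have haw : a ≠ w := fun h => hac (h ▸ hwc)
  have hwC : w ∈ C := hC.2 a ha c (hK.1.1 hc) hac w (Or.inr ⟨M, hM, haM, hwM⟩) hwc
  obtain ⟨t, htM, htK⟩ := hmeet M (hC.1.lineIn hM haM hwM haw ha hwC)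
  have hwt : w ≠ t := fun h => hwK (h ▸ htK)
  exact hac (hs.col_of_col_of_col hM hwM htM hwt hwc.symm (hK.col hc htK) haM).symm

lemma isConvex_union {A B : Set P} (hA : IsSingular Ls A) (hB : IsSingular Ls B)
    (hcross : ∀ u ∈ A, u ∉ B → ∀ v ∈ B, v ∉ A → ¬ Col Ls u v)
    (hperp : ∀ a ∈ A, ∀ c ∈ B, ¬ Col Ls a c →
      ∀ w, Col Ls a w → Col Ls w c → w ∈ B) :
    IsConvex Ls (A ∪ B) := by
  refine ⟨⟨Set.subset_univ _, fun L hL x hxL y hyL hxy hx hy => ?_⟩,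
    fun x hx y hy hxy w hxw hwy => ?_⟩
  · have hcol : Col Ls x y := Or.inr ⟨L, hL.1, hxL, hyL⟩
    have inA (hxA : x ∈ A) (hyA : y ∈ A) : L ⊆ A ∪ B :=
      (hA.1.2 L hL x hxL y hyL hxy hxA hyA).trans Set.subset_union_left
    have inB (hxB : x ∈ B) (hyB : y ∈ B) : L ⊆ A ∪ B :=
      (hB.1.2 L hL x hxL y hyL hxy hxB hyB).trans Set.subset_union_right
    rcases hx with hxA | hxB <;> rcases hy with hyA | hyB
    · exact inA hxA hyA
    · by_cases hxB : x ∈ B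
      · exact inB hxB hyB
      by_cases hyA : y ∈ A
      · exact inA hxA hyA
      exact absurd hcol (hcross x hxA hxB y hyB hyA)
    · by_cases hyB : y ∈ B
      · exact inB hxB hyB
      by_cases hxA : x ∈ A
      · exact inA hxA hyA
      exact absurd hcol.symm (hcross y hyA hyB x hxB hxA)
    · exact inB hxB hyB
  · rcases hx with hxA | hxB <;> rcases hy with hyA | hyB
    · exact absurd (hA.col hxA hyA) hxy
    · exact Or.inr (hperp x hxA y hyB hxy w hxw hwy)
    · exact Or.inr (hperp y hyA x hxB (fun h => hxy h.symm) w hwy.symm hxw.symm)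
    · exact absurd (hB.col hxB hyB) hxy

lemma StrongParapolar2.subset_union_of_meets (hs : StrongParapolar2 Ls) {C K σ W : Set P}
    (hC : IsConvex Ls C) (hK : IsSingularIn Ls C K)
    (hmeet : ∀ L, LineIn Ls C L → ∃ w ∈ L, w ∈ K) {q z : P} (hq : q ∈ C) (hz : z ∈ K)
    (hσ : SmallestConvex Ls q z σ) (hW : IsSingularIn Ls σ W) (hqW : q ∈ W)
    (hperpW : ∀ t ∈ K, Col Ls q t → t ∈ W) : σ ⊆ W ∪ (K ∩ σ) := by
  have hσC : σ ⊆ C := hσ.2.2.2 C hC hq (hK.1.1 hz)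
  have hWg : IsSingular Ls W := (hσ.1.1.isSingularIn_iff hW.1.1).2 hW
  have hKg : IsSingular Ls (K ∩ σ) := ((hC.1.isSingularIn_iff hK.1.1).2 hK).inter hσ.1.1
  refine hσ.2.2.2 _ (isConvex_union hWg hKg ?_ ?_) (Or.inl hqW) (Or.inr ⟨hz, hσ.2.2.1⟩)
  · intro u hu huK v hv hvW huv
    have hqv : ¬ Col Ls q v := fun h => hvW (hperpW v hv.1 h)
    exact huK ⟨hs.mem_of_col_of_col hC hK hmeet hq hv.1 hqv (hWg.col hqW hu) huv, hW.1.1 hu⟩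
  · intro a ha c hc hac w haw hwc
    exact ⟨hs.mem_of_col_of_col hC hK hmeet (hσC (hW.1.1 ha)) hc.1 hac haw hwc,
      hσ.1.2 a (hW.1.1 ha) c hc.2 hac w haw hwc⟩

theorem IsSymp.exists_lineIn_forall_not_mem (hs : StrongParapolar2 Ls) {C K : Set P}
    (hC : IsSymp Ls C) (hK : IsSingularIn Ls C K) :
    ∃ L, LineIn Ls C L ∧ ∀ w ∈ L, w ∉ K := by
  by_contra! hmeet
  obtain ⟨r, hr, hPS⟩ := hC.exists_isPolarSpace hs
  obtain ⟨z, -, hz⟩ := hmeet _ (hPS.hasPolarRank.exists_lineIn hr).choose_spec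
  obtain ⟨q, hq, hzq⟩ := hPS.exists_not_colIn (hK.1.1 hz)
  have hqz : ¬ Col Ls q z := fun h => hzq (hC.isSubspace.colIn (hK.1.1 hz) hq h.symm)
  obtain ⟨σ, hσ, _, -, hPSσ⟩ := hs.pps2 q z hqz
  have hperpσ (t : P) (ht : t ∈ K) (hqt : Col Ls q t) : t ∈ σ :=
    hσ.mem_of_col hqz hqt (hK.col ht hz)
  obtain ⟨W, hW, hXW⟩ := hs.exists_isSingularIn_superset hσ.1.1
    (X := {t ∈ K | Col Ls q t} ∪ {q})
    (Set.union_subset (fun t ht => hperpσ t ht.1 ht.2) (Set.singleton_subset_iff.2 hσ.2.1)) (by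
      rintro x (hx | rfl) y (hy | rfl)
      · exact hK.col hx.1 hy.1
      · exact hx.2.symm
      · exact hy.2
      · exact Or.inl rfl)
  have hcover := hs.subset_union_of_meets hC.isConvex hK hmeet hq hz hσ hW
    (hXW (Or.inr rfl)) fun t ht hqt => hXW (Or.inl ⟨ht, hqt⟩)
  -- a point `t` of `q^⊥ ∩ K` is then collinear with all of `ξ(q, z)`
  obtain ⟨M, hM, hqM⟩ := hPS.exists_lineIn_mem hr hq
  obtain ⟨t, htM, ht⟩ := hmeet M hM
  have hqt : Col Ls q t := Or.inr ⟨M, hM.1, hqM, htM⟩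
  obtain ⟨g, hg, htg⟩ := hPSσ.exists_not_colIn (hperpσ t ht hqt)
  refine htg (hσ.1.1.colIn (hperpσ t ht hqt) hg ?_)
  rcases hcover hg with hgW | hgK
  · exact hW.col (hXW (Or.inl ⟨ht, hqt⟩)) hgW
  · exact hK.col ht hgK.1

lemma IsConvex.isSingularIn_col (hs : StrongParapolar2 Ls) {C : Set P} (hC : IsConvex Ls C)
    {x : P} (hx : x ∉ C) : IsSingularIn Ls C {w ∈ C | Col Ls x w} :=
  ⟨hs.isSubspaceIn_col C x, fun a ha b hb => hC.1.colIn ha.1 hb.1 <| by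
    by_contra hab
    exact hx (hC.2 a ha.1 b hb.1 hab x ha.2.symm hb.2)⟩

lemma IsSymp.exists_lineIn_forall_not_col (hs : StrongParapolar2 Ls) {C : Set P}
    (hC : IsSymp Ls C) {x : P} (hx : x ∉ C) :
    ∃ L, LineIn Ls C L ∧ ∀ w ∈ L, ¬ Col Ls x w := by
  obtain ⟨L, hL, hLx⟩ := hC.exists_lineIn_forall_not_mem hs (hC.isConvex.isSingularIn_col hs hx)
  exact ⟨L, hL, fun w hw hxw => hLx w hw ⟨hL.2 hw, hxw⟩⟩

lemma IsSymp.eq_of_subset (hs : StrongParapolar2 Ls) {C C' : Set P} (hC : IsSymp Ls C)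
    (hC' : IsSymp Ls C') (h : C ⊆ C') : C = C' := by
  refine h.antisymm fun p hp => ?_
  by_contra hpC
  obtain ⟨L, hL, hLp⟩ := hC.exists_lineIn_forall_not_col hs hpC
  obtain ⟨r, -, hPS'⟩ := hC'.exists_isPolarSpace hs
  obtain ⟨w, hw, hpw⟩ := hPS'.exists_colIn_of_lineIn hp ⟨hL.1, hL.2.trans h⟩
  exact hLp w hw hpw.col
/-- The symplecton `ξ(x, y)` when `x` and `y` are not collinear. -/
def xi (Ls : Set (Set P)) (x y : P) : Set P :=
  ⋂₀ {S | IsConvex Ls S ∧ x ∈ S ∧ y ∈ S}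

lemma smallestConvex_xi (x y : P) : SmallestConvex Ls x y (xi Ls x y) :=
  ⟨⟨⟨Set.subset_univ _, fun L hL u huL v hvL huv hu hv _ hw S hS =>
      hS.1.1.2 L ⟨hL.1, Set.subset_univ L⟩ u huL v hvL huv (hu S hS) (hv S hS) hw⟩,
    fun u hu v hv huv w huw hwv S hS => hS.1.2 u (hu S hS) v (hv S hS) huv w huw hwv⟩,
    fun _ hS => hS.2.1, fun _ hS => hS.2.2,
    fun _ hS hx hy => Set.sInter_subset_of_mem ⟨hS, hx, hy⟩⟩

lemma isSymp_xi {x y : P} (hxy : ¬ Col Ls x y) : IsSymp Ls (xi Ls x y) :=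
  ⟨x, y, hxy, smallestConvex_xi x y⟩

lemma IsSymp.eq_xi (hs : StrongParapolar2 Ls) {C : Set P} (hC : IsSymp Ls C) {c : P}
    (hc : c ∈ C) : ∃ y, ¬ Col Ls c y ∧ C = xi Ls c y := by
  obtain ⟨r, -, hPS⟩ := hC.exists_isPolarSpace hs
  obtain ⟨y, hy, hcy⟩ := hPS.exists_not_colIn hc
  have hcy' : ¬ Col Ls c y := fun h => hcy (hC.isSubspace.colIn hc hy h)
  exact ⟨y, hcy', ((isSymp_xi hcy').eq_of_subset hs hC
    ((smallestConvex_xi c y).2.2.2 C hC.isConvex hc hy)).symm⟩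

lemma xi_subset_xi_of_col {x y y' u : P} (hxy' : ¬ Col Ls x y') {L : Set P} (hL : L ∈ Ls)
    (hy : y ∈ L) (hy' : y' ∈ L) (hu : u ∈ L) (hxu : Col Ls x u) :
    xi Ls x y ⊆ xi Ls x y' := by
  have h := smallestConvex_xi (Ls := Ls) x y'
  have huy' : u ≠ y' := fun h => hxy' (h ▸ hxu)
  have hu' : u ∈ xi Ls x y' := h.mem_of_col hxy' hxu (Or.inr ⟨L, hL, hu, hy'⟩)
  exact (smallestConvex_xi x y).2.2.2 _ h.1 h.2.1
    ((h.1.1.lineIn hL hu hy' huy' hu' h.2.2.1).2 hy)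

def SameRank (Ls : Set (Set P)) (A B : Set P) : Prop :=
  ∀ r, HasPolarRank Ls A r ↔ HasPolarRank Ls B r

lemma SameRank.refl (A : Set P) : SameRank Ls A A :=
  fun _ => Iff.rfl

lemma SameRank.symm {A B : Set P} (h : SameRank Ls A B) : SameRank Ls B A :=
  fun r => (h r).symm

lemma SameRank.trans {A B D : Set P} (h : SameRank Ls A B) (h' : SameRank Ls B D) :
    SameRank Ls A D :=
  fun r => (h r).trans (h' r)

lemma HasPolarRank.sameRank {A B : Set P} {r : ℕ} (hA : HasPolarRank Ls A r)
    (hB : HasPolarRank Ls B r) : SameRank Ls A B :=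
  fun _ => ⟨fun h => hA.unique h ▸ hB, fun h => hB.unique h ▸ hA⟩

lemma ImbrexGeometry.sameRank_xi_of_far (hΓ : ImbrexGeometry Ls) {x : P} {L : Set P}
    (hL : L ∈ Ls) (hfar : ∀ w ∈ L, ¬ Col Ls x w) {y y' : P} (hy : y ∈ L) (hy' : y' ∈ L) :
    SameRank Ls (xi Ls x y) (xi Ls x y') := by
  obtain rfl | hne := eq_or_ne y y'
  · exact SameRank.refl _
  obtain ⟨hM, hM'⟩ := hΓ.imb x L hL hfar y hy y' hy' hne _ _
    (smallestConvex_xi x y) (smallestConvex_xi x y')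
  have hC := isSymp_xi (hfar y hy)
  have hC' := isSymp_xi (hfar y' hy')
  obtain ⟨r, -, hPS⟩ := hC.exists_isPolarSpace hΓ.spp
  obtain ⟨r', -, hPS'⟩ := hC'.exists_isPolarSpace hΓ.spp
  have hrr' : r = r' := (hPS.hasPolarRank_of_maxSingularIn hΓ.spp hC.isSubspace hM).unique
    (hPS'.hasPolarRank_of_maxSingularIn hΓ.spp hC'.isSubspace hM')
  exact hPS.hasPolarRank.sameRank (hrr' ▸ hPS'.hasPolarRank)

lemma ImbrexGeometry.sameRank_xi_of_col (hΓ : ImbrexGeometry Ls) {x y y' : P}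
    (hxy : ¬ Col Ls x y) (hxy' : ¬ Col Ls x y') (hyy' : Col Ls y y') :
    SameRank Ls (xi Ls x y) (xi Ls x y') := by
  obtain rfl | ⟨L, hL, hy, hy'⟩ := hyy'
  · exact SameRank.refl _
  by_cases hfar : ∀ w ∈ L, ¬ Col Ls x w
  · exact hΓ.sameRank_xi_of_far hL hfar hy hy'
  push Not at hfar
  obtain ⟨u, hu, hxu⟩ := hfar
  rw [(xi_subset_xi_of_col hxy' hL hy hy' hu hxu).antisymm
    (xi_subset_xi_of_col hxy hL hy' hy hu hxu)]
  exact SameRank.refl _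

lemma ImbrexGeometry.sameRank_xi (hΓ : ImbrexGeometry Ls) {x y y' : P} (hxy : ¬ Col Ls x y)
    (hxy' : ¬ Col Ls x y') : SameRank Ls (xi Ls x y) (xi Ls x y') := by
  have hs := hΓ.spp
  by_cases hyy' : Col Ls y y'
  · exact hΓ.sameRank_xi_of_col hxy hxy' hyy'
  have hτ := isSymp_xi hyy'
  have hτxi := smallestConvex_xi (Ls := Ls) y y'
  by_cases hx : x ∈ xi Ls y y'
  · have hC := (isSymp_xi hxy).eq_of_subset hs hτ
      ((smallestConvex_xi x y).2.2.2 _ hτxi.1 hx hτxi.2.1)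
    have hC' := (isSymp_xi hxy').eq_of_subset hs hτ
      ((smallestConvex_xi x y').2.2.2 _ hτxi.1 hx hτxi.2.2.1)
    rw [hC, hC']
    exact SameRank.refl _
  obtain ⟨Λ, hΛ, hfar⟩ := hτ.exists_lineIn_forall_not_col hs hx
  obtain ⟨r, -, hPS⟩ := hτ.exists_isPolarSpace hs
  obtain ⟨w, hw, hyw⟩ := hPS.exists_colIn_of_lineIn hτxi.2.1 hΛ
  obtain ⟨w', hw', hyw'⟩ := hPS.exists_colIn_of_lineIn hτxi.2.2.1 hΛ
  exact ((hΓ.sameRank_xi_of_col hxy (hfar w hw) hyw.col).trans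
    (hΓ.sameRank_xi_of_far hΛ.1 hfar hw hw')).trans
    (hΓ.sameRank_xi_of_col hxy' (hfar w' hw') hyw'.col).symm

lemma ImbrexGeometry.sameRank_of_mem (hΓ : ImbrexGeometry Ls) {C C' : Set P}
    (hC : IsSymp Ls C) (hC' : IsSymp Ls C') {c : P} (hc : c ∈ C) (hc' : c ∈ C') :
    SameRank Ls C C' := by
  obtain ⟨y, hcy, rfl⟩ := hC.eq_xi hΓ.spp hc
  obtain ⟨y', hcy', rfl⟩ := hC'.eq_xi hΓ.spp hc'
  exact hΓ.sameRank_xi hcy hcy'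

lemma ImbrexGeometry.sameRank (hΓ : ImbrexGeometry Ls) {C C' : Set P} (hC : IsSymp Ls C)
    (hC' : IsSymp Ls C') : SameRank Ls C C' := by
  obtain ⟨a, b, hab, hCab⟩ := id hC
  obtain ⟨a', _, -, hsc'⟩ := id hC'
  by_cases ha'C : a' ∈ C
  · exact hΓ.sameRank_of_mem hC hC' ha'C hsc'.2.1
  obtain ⟨p, hp, hpa'⟩ : ∃ p ∈ C, ¬ Col Ls p a' := by
    by_contra! h
    exact ha'C (hCab.mem_of_col hab (h a hCab.2.1) (h b hCab.2.2.1).symm)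
  have hτ := smallestConvex_xi (Ls := Ls) p a'
  exact (hΓ.sameRank_of_mem hC (isSymp_xi hpa') hp hτ.2.1).trans
    (hΓ.sameRank_of_mem (isSymp_xi hpa') hC' hτ.2.2.1 hsc'.2.1)

/-- In an imbrex geometry, all symplecta have the same polar rank. -/
theorem symps_constant_rank (Ls : Set (Set P)) (hΓ : ImbrexGeometry Ls)
    (H H' : Set P) (hH : IsSymp Ls H) (hH' : IsSymp Ls H')
    (r r' : ℕ) (hr : HasPolarRank Ls H r) (hr' : HasPolarRank Ls H' r') :
    r = r' :=
  ((hΓ.sameRank hH hH' r).1 hr).unique hr'
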